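/- arXiv:0910.0449 — 2 statements merged into one kernel-verified Lean document; each statement's English description precedes it below -/
import Mathlib

section
/- Suppose det(τ(1/0)) = a > 0 and det(τ(0)) = b > 0 and det(τ(n)) = n·a + b for all integers n ≥ 0. If τ(1/0) and τ(0) are quasi-alternating, then (in the abstract inductive framework where τ(n) has a crossing whose 0-resolution is τ(n-1) and whose 1-resolution is τ(1/0)) every τ(n), n ≥ 1, is quasi-alternating. -/
/-- The set of quasi-alternating links, abstractly: the smallest set of links
containing the unknot and closed under the quasi-alternating relation.
`Res L L0 L1` means `L` has a distinguished crossing whose 0- and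
1-resolutions are `L0` and `L1`. -/
inductive QA {Link : Type*} (det : Link → ℕ) (unknot : Link)
    (Res : Link → Link → Link → Prop) : Link → Prop
  | unknot : QA det unknot Res unknot
  | crossing {L L0 L1 : Link} :
      Res L L0 L1 →
      det L = det L0 + det L1 →
      0 < det L0 → 0 < det L1 →
      QA det unknot Res L0 → QA det unknot Res L1 →
      QA det unknot Res L

/-- Suppose `det(τ(1/0)) = a > 0`, `det(τ(0)) = b > 0` and
`det(τ(n)) = n·a + b` for all `n ≥ 0`, where `τ(n)` has a crossing whose
0-resolution is `τ(n-1)` and whose 1-resolution is `τ(1/0)`.  If `τ(1/0)`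
and `τ(0)` are quasi-alternating then every `τ(n)`, `n ≥ 1`, is
quasi-alternating. -/
theorem integer_fillings_qa {Link : Type*} (det : Link → ℕ) (unknot : Link)
    (Res : Link → Link → Link → Prop)
    (tau : ℕ → Link) (tauInf : Link) (a b : ℕ)
    (hdetInf : det tauInf = a) (hdet0 : det (tau 0) = b)
    (ha : 0 < a) (hb : 0 < b)
    (hdet : ∀ n : ℕ, det (tau n) = n * a + b)
    (hres : ∀ n : ℕ, Res (tau (n + 1)) (tau n) tauInf)
    (hInf : QA det unknot Res tauInf) (h0 : QA det unknot Res (tau 0)) :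
    ∀ n : ℕ, 1 ≤ n → QA det unknot Res (tau n) := by
  have key : ∀ n : ℕ, QA det unknot Res (tau n) := by
    intro n
    induction n with
    | zero => exact h0
    | succ k ih =>
      refine QA.crossing (hres k) ?_ ?_ ?_ ih hInf
      · rw [hdet (k+1), hdet k, hdetInf]; ring
      · rw [hdet k]; omega
      · rw [hdetInf]; exact ha
  intro n _; exact key n
end

section
/- Suppose Q is a set of links containing all non-split alternating links and closed under the quasi-alternating relation. If the branch set τ(1/0) is an unknot and τ(0) is a non-split two-bridge link, and det(τ(n)) = n + det(τ(0)) for n ≥ 0, then every τ(n) for n ≥ 0 lies in Q. -/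
/-- Suppose `Q` is a set of links containing all non-split alternating links
and closed under the quasi-alternating relation.  If `τ(1/0)` is an unknot
(alternating, non-split, of determinant 1), `τ(0)` is a non-split two-bridge
link (hence alternating), `det(τ(n)) = n + det(τ(0))` for all `n ≥ 0`, and
`τ(n+1)` has a crossing resolving to `τ(n)` and `τ(1/0)`, then every `τ(n)`,
`n ≥ 0`, lies in `Q`. -/
theorem berge_integer_closures_qa {Link : Type*}
    (det : Link → ℕ) (Res : Link → Link → Link → Prop)
    (Alternating NonSplit TwoBridge : Link → Prop)
    (Q : Set Link)
    (hAlt : ∀ L, Alternating L → NonSplit L → L ∈ Q)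
    (hClosed : ∀ L L0 L1, Res L L0 L1 → det L = det L0 + det L1 →
      0 < det L0 → 0 < det L1 → L0 ∈ Q → L1 ∈ Q → L ∈ Q)
    (hTB : ∀ L, TwoBridge L → Alternating L)
    (tau : ℕ → Link) (tauInf : Link)
    (hInfAlt : Alternating tauInf) (hInfNS : NonSplit tauInf)
    (hInfDet : det tauInf = 1)
    (h0TB : TwoBridge (tau 0)) (h0NS : NonSplit (tau 0))
    (h0pos : 0 < det (tau 0))
    (hdet : ∀ n : ℕ, det (tau n) = n + det (tau 0))
    (hres : ∀ n : ℕ, Res (tau (n + 1)) (tau n) tauInf) :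
    ∀ n : ℕ, tau n ∈ Q := by
  intro n
  induction n with
  | zero => exact hAlt _ (hTB _ h0TB) h0NS
  | succ k ih =>
    refine hClosed _ _ _ (hres k) ?_ ?_ ?_ ih (hAlt _ hInfAlt hInfNS)
    · rw [hdet (k+1), hdet k, hInfDet]; omega
    · rw [hdet k]; omega
    · omega
end
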